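/- For every n ≥ 1 and every x ∈ [0,1], the second central moment of the modified Durrmeyer operator satisfies D_n^{M,1}((t − x)^2; x) = 2(3a_1(n) + 4a_0(n) − 11a_1(n)x + 14x^2 a_0(n) + 11a_1(n)x^2 − 14a_0(n)x)/((n+2)(n+3)) + 2(1−x)x(2a_0(n) + a_1(n)) n/((n+2)(n+3)). -/

import Mathlib

/-!
By the Beta integral, `(n + 1) ∫₀¹ p_{n,k}(t) (t - x)² dt = q(k)` with
`q(k) = (k+1)(k+2)/((n+2)(n+3)) - 2x(k+1)/(n+2) + x²`, a quadratic polynomial in `k`.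
Shifting the index in the second half of `p_{n,k}^{M,1}` turns `D_n^{M,1}((t - x)²; x)` into
`Σ_k p_{n-1,k}(x) (a(x,n) q(k) + a(1-x,n) q(k+1))`, i.e. the expectation of a quadratic in a
binomial variable with parameters `n - 1` and `x`, which only needs its mean `(n-1)x` and
variance `(n-1)x(1-x)`.
-/

open Filter Topology

/-- Bernstein basis polynomial `p_{n,k}(x)`, zero when `k < 0` or `k > n`. -/
noncomputable def bern (n : ℕ) (k : ℤ) (x : ℝ) : ℝ :=
  if 0 ≤ k ∧ k ≤ (n : ℤ) then (n.choose k.toNat : ℝ) * x ^ k.toNat * (1 - x) ^ (n - k.toNat)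
  else 0

/-- Modified Bernstein basis `p_{n,k}^{M,1}(x)` of Khosravian-Arab et al. -/
noncomputable def pM1 (a0 a1 : ℕ → ℝ) (n : ℕ) (k : ℤ) (x : ℝ) : ℝ :=
  (a1 n * x + a0 n) * bern (n - 1) k x + (a1 n * (1 - x) + a0 n) * bern (n - 1) (k - 1) x

/-- First-order modified Durrmeyer operator `D_n^{M,1}(f;x)`. -/
noncomputable def DM1 (a0 a1 : ℕ → ℝ) (n : ℕ) (f : ℝ → ℝ) (x : ℝ) : ℝ :=
  ((n : ℝ) + 1) * ∑ k ∈ Finset.range (n + 1),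
    pM1 a0 a1 n k x * ∫ t in (0:ℝ)..1, bern n k t * f t

open Nat in
theorem integral_pow_mul_one_sub_pow (a b : ℕ) :
    ∫ t in (0:ℝ)..1, t ^ a * (1 - t) ^ b = (a ! * b ! : ℝ) / (a + b + 1)! := by
  have h := Complex.betaIntegral_eq_Gamma_mul_div (a + 1) (b + 1)
    (by norm_cast; omega) (by norm_cast; omega)
  rw [show (a + 1 : ℂ) + (b + 1) = (a + b + 1 : ℕ) + 1 by push_cast; ring,
    Complex.Gamma_nat_eq_factorial, Complex.Gamma_nat_eq_factorial,
    Complex.Gamma_nat_eq_factorial, Complex.betaIntegral] at h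
  simp only [add_sub_cancel_right, Complex.cpow_natCast] at h
  apply Complex.ofReal_injective
  rw [← intervalIntegral.integral_ofReal]
  push_cast
  exact h

theorem bern_natCast {n k : ℕ} (hk : k ≤ n) (t : ℝ) :
    bern n k t = n.choose k * t ^ k * (1 - t) ^ (n - k) := by
  simp [bern, hk]

theorem bern_eq_zero_of_neg_or_lt {n : ℕ} {k : ℤ} (hk : k < 0 ∨ n < k) (t : ℝ) :
    bern n k t = 0 := by
  rw [bern, if_neg (by omega)]

theorem bern_natCast_eq_eval (n k : ℕ) (x : ℝ) :
    bern n k x = (bernsteinPolynomial ℝ n k).eval x := by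
  rcases le_or_gt k n with hk | hk
  · simp [bern_natCast hk, bernsteinPolynomial]
  · rw [bernsteinPolynomial.eq_zero_of_lt ℝ hk, bern_eq_zero_of_neg_or_lt (by omega),
      Polynomial.eval_zero]

theorem integral_bern_mul_pow {n k : ℕ} (hk : k ≤ n) (j : ℕ) :
    ∫ t in (0:ℝ)..1, bern n k t * t ^ j
      = ((k + 1).ascFactorial j : ℝ) / (n + 1).ascFactorial (j + 1) := by
  have hfun : (fun t => bern n k t * t ^ j)
      = fun t => (n.choose k : ℝ) * (t ^ (k + j) * (1 - t) ^ (n - k)) := by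
    ext t; rw [bern_natCast hk]; ring
  rw [hfun, intervalIntegral.integral_const_mul, integral_pow_mul_one_sub_pow,
    show k + j + (n - k) + 1 = n + (j + 1) by omega]
  have hk' : (k.factorial : ℝ) * (k + 1).ascFactorial j = (k + j).factorial := by
    exact_mod_cast Nat.factorial_mul_ascFactorial k j
  have hn' : (n.factorial : ℝ) * (n + 1).ascFactorial (j + 1) = (n + (j + 1)).factorial := by
    exact_mod_cast Nat.factorial_mul_ascFactorial n (j + 1)
  have hc : (n.choose k : ℝ) * k.factorial * (n - k).factorial = n.factorial := by
    exact_mod_cast Nat.choose_mul_factorial_mul_factorial hk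
  rw [← hk', ← hn', ← hc]
  have : (n.choose k : ℝ) ≠ 0 := by exact_mod_cast (Nat.choose_pos hk).ne'
  have : ((n + 1).ascFactorial (j + 1) : ℝ) ≠ 0 := by positivity
  field_simp

theorem continuous_bern (n : ℕ) (k : ℤ) : Continuous (bern n k) := by
  unfold bern; split_ifs <;> fun_prop

theorem integral_bern_mul_sub_sq {n k : ℕ} (hk : k ≤ n) (x : ℝ) :
    ((n : ℝ) + 1) * ∫ t in (0:ℝ)..1, bern n k t * (t - x) ^ 2
      = (k + 1) * (k + 2) / ((n + 2) * (n + 3)) - 2 * x * (k + 1) / (n + 2) + x ^ 2 := by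
  have hint : ∀ j : ℕ,
      IntervalIntegrable (fun t => bern n k t * t ^ j) MeasureTheory.volume 0 1 :=
    fun j => ((continuous_bern n k).mul (continuous_pow j)).intervalIntegrable 0 1
  have hexp : (fun t => bern n k t * (t - x) ^ 2) = fun t =>
      bern n k t * t ^ 2 - 2 * x * (bern n k t * t ^ 1) + x ^ 2 * (bern n k t * t ^ 0) := by
    ext t; ring
  rw [hexp,
    intervalIntegral.integral_add ((hint 2).sub ((hint 1).const_mul _)) ((hint 0).const_mul _),
    intervalIntegral.integral_sub (hint 2) ((hint 1).const_mul _),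
    intervalIntegral.integral_const_mul, intervalIntegral.integral_const_mul,
    integral_bern_mul_pow hk, integral_bern_mul_pow hk, integral_bern_mul_pow hk]
  simp only [Nat.ascFactorial_succ, Nat.ascFactorial_zero]
  push_cast
  field_simp
  ring

theorem sum_bern (n : ℕ) (x : ℝ) : ∑ k ∈ Finset.range (n + 1), bern n k x = 1 := by
  simp only [bern_natCast_eq_eval, ← Polynomial.eval_finsetSum, bernsteinPolynomial.sum,
    Polynomial.eval_one]

theorem sum_natCast_mul_bern (n : ℕ) (x : ℝ) :
    ∑ k ∈ Finset.range (n + 1), (k : ℝ) * bern n k x = n * x := by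
  simpa [bern_natCast_eq_eval, Polynomial.eval_finsetSum] using
    congrArg (Polynomial.eval x) (bernsteinPolynomial.sum_smul (R := ℝ) n)

theorem sum_sub_sq_mul_bern (n : ℕ) (x : ℝ) :
    ∑ k ∈ Finset.range (n + 1), (n * x - k) ^ 2 * bern n k x = n * x * (1 - x) := by
  simpa [bern_natCast_eq_eval, Polynomial.eval_finsetSum] using
    congrArg (Polynomial.eval x) (bernsteinPolynomial.variance (R := ℝ) n)

theorem sum_bern_mul_quadratic (n : ℕ) (x α β γ : ℝ) :
    ∑ k ∈ Finset.range (n + 1), bern n k x * (α * k ^ 2 + β * k + γ)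
      = α * (n * x * (1 - x) + (n * x) ^ 2) + β * (n * x) + γ := by
  have hsplit : ∑ k ∈ Finset.range (n + 1), bern n k x * (α * k ^ 2 + β * k + γ)
      = α * ∑ k ∈ Finset.range (n + 1), (n * x - k) ^ 2 * bern n k x
        + (β + 2 * α * n * x) * ∑ k ∈ Finset.range (n + 1), (k : ℝ) * bern n k x
        + (γ - α * (n * x) ^ 2) * ∑ k ∈ Finset.range (n + 1), bern n k x := by
    simp only [Finset.mul_sum, ← Finset.sum_add_distrib]
    exact Finset.sum_congr rfl fun k _ => by ring
  rw [hsplit, sum_sub_sq_mul_bern, sum_natCast_mul_bern, sum_bern]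
  ring

theorem sum_pM1_mul (a0 a1 : ℕ → ℝ) (n : ℕ) (x : ℝ) (f : ℕ → ℝ) :
    ∑ k ∈ Finset.range (n + 1 + 1), pM1 a0 a1 (n + 1) k x * f k
      = ∑ k ∈ Finset.range (n + 1), bern n k x *
          ((a1 (n + 1) * x + a0 (n + 1)) * f k
            + (a1 (n + 1) * (1 - x) + a0 (n + 1)) * f (k + 1)) := by
  have hlast : ∑ k ∈ Finset.range (n + 1 + 1), bern n k x * f k
      = ∑ k ∈ Finset.range (n + 1), bern n k x * f k := by
    rw [Finset.sum_range_succ, bern_eq_zero_of_neg_or_lt (by omega), zero_mul, add_zero]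
  have hshift : ∑ k ∈ Finset.range (n + 1 + 1), bern n (k - 1) x * f k
      = ∑ k ∈ Finset.range (n + 1), bern n k x * f (k + 1) := by
    rw [Finset.sum_range_succ', Nat.cast_zero, zero_sub, bern_eq_zero_of_neg_or_lt (by omega),
      zero_mul, add_zero]
    simp only [Nat.cast_succ, add_sub_cancel_right]
  calc _ = (a1 (n + 1) * x + a0 (n + 1)) * ∑ k ∈ Finset.range (n + 1 + 1), bern n k x * f k
        + (a1 (n + 1) * (1 - x) + a0 (n + 1))
          * ∑ k ∈ Finset.range (n + 1 + 1), bern n (k - 1) x * f k := by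
        simp only [pM1, Nat.add_sub_cancel, Finset.mul_sum, ← Finset.sum_add_distrib]
        exact Finset.sum_congr rfl fun k _ => by ring
    _ = _ := by
        rw [hlast, hshift]
        simp only [Finset.mul_sum, ← Finset.sum_add_distrib]
        exact Finset.sum_congr rfl fun k _ => by ring

theorem DM1_central_moment_two_general (a0 a1 : ℕ → ℝ) (n : ℕ) (hn : 1 ≤ n)
    (x : ℝ) :
    DM1 a0 a1 n (fun t => (t - x) ^ 2) x
      = 2 * (3 * a1 n + 4 * a0 n - 11 * a1 n * x + 14 * x ^ 2 * a0 n + 11 * a1 n * x ^ 2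
            - 14 * a0 n * x) / (((n : ℝ) + 2) * ((n : ℝ) + 3))
        + 2 * (1 - x) * x * (2 * a0 n + a1 n) * (n : ℝ) / (((n : ℝ) + 2) * ((n : ℝ) + 3)) := by
  obtain ⟨m, rfl⟩ : ∃ m, n = m + 1 := ⟨n - 1, by omega⟩
  set N : ℝ := ((m + 1 : ℕ) : ℝ)
  set A := a1 (m + 1) * x + a0 (m + 1)
  set B := a1 (m + 1) * (1 - x) + a0 (m + 1)
  let q : ℕ → ℝ := fun k =>
    (k + 1) * (k + 2) / ((N + 2) * (N + 3)) - 2 * x * (k + 1) / (N + 2) + x ^ 2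
  calc DM1 a0 a1 (m + 1) (fun t => (t - x) ^ 2) x
      = ∑ k ∈ Finset.range (m + 1 + 1), pM1 a0 a1 (m + 1) k x * q k := by
        rw [DM1, Finset.mul_sum]
        refine Finset.sum_congr rfl fun k hk => ?_
        rw [mul_left_comm, integral_bern_mul_sub_sq (Finset.mem_range_succ_iff.mp hk)]
    _ = ∑ k ∈ Finset.range (m + 1), bern m k x * (A * q k + B * q (k + 1)) := sum_pM1_mul ..
    _ = ∑ k ∈ Finset.range (m + 1), bern m k x *
          ((A + B) / ((N + 2) * (N + 3)) * k ^ 2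
            + ((3 * A + 5 * B) / ((N + 2) * (N + 3)) - 2 * x * (A + B) / (N + 2)) * k
            + ((2 * A + 6 * B) / ((N + 2) * (N + 3)) - 2 * x * (A + 2 * B) / (N + 2)
              + (A + B) * x ^ 2)) :=
        Finset.sum_congr rfl fun k _ => by push_cast [q]; ring
    _ = _ := by
        rw [sum_bern_mul_quadratic]
        rw [show N = m + 1 from Nat.cast_succ m]
        field_simp
        simp only [A, B]
        ring

theorem DM1_central_moment_two (a0 a1 : ℕ → ℝ) (n : ℕ) (hn : 1 ≤ n)
    (x : ℝ) (hx : x ∈ Set.Icc (0:ℝ) 1) :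
    DM1 a0 a1 n (fun t => (t - x) ^ 2) x
      = 2 * (3 * a1 n + 4 * a0 n - 11 * a1 n * x + 14 * x ^ 2 * a0 n + 11 * a1 n * x ^ 2
            - 14 * a0 n * x) / (((n : ℝ) + 2) * ((n : ℝ) + 3))
        + 2 * (1 - x) * x * (2 * a0 n + a1 n) * (n : ℝ) / (((n : ℝ) + 2) * ((n : ℝ) + 3)) :=
  DM1_central_moment_two_general a0 a1 n hn x
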